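/- arXiv:math/0004094 — 4 statements merged into one kernel-verified Lean document; each statement's English description precedes it below -/
import Mathlib

section
/- Let R be a commutative ℚ-algebra and let f(t) = Σ_{k≥0} a_k t^k be a formal power series over R with a_0 = 1 and a_1 = 0. Then there exists a unique formal power series b(t) = Σ_{k≥0} b_k t^k with Σ_{k≥0} f(t)^{2k+1} b_k t^k = 1 (the sum taken degreewise), and it satisfies b_0 = 1, b_1 = 0, b_2 = -a_2, and b_3 = -a_3. -/
/-!
Since `f ^ (2k+1)` has constant coefficient `1`, the coefficient of `t^n` in the equation is
`b_n + Σ_{k<n} [t^(n-k)] f^(2k+1) · b_k`, so the system for `(b_n)` is unitriangular and is solved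
uniquely by recursion on `n`. Because `a_1 = 0`, every power of `f` has vanishing coefficient of `t`,
and the equations for `n ≤ 3` give `b_0 = 1`, `b_1 = 0`, `b_2 = -a_2`, `b_3 = -a_3`.
-/

open PowerSeries Finset

section Unitriangular

variable {R : Type*} [Ring R] (c : ℕ → ℕ → R) (e : ℕ → R)

noncomputable def unitriangularSolve : ℕ → R
  | n => e n - ∑ k : Fin n, c n k * unitriangularSolve k

variable {c}

theorem sum_range_mul_unitriangularSolve (hc : ∀ n, c n n = 1) (n : ℕ) :
    ∑ k ∈ range (n + 1), c n k * unitriangularSolve c e k = e n := by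
  rw [sum_range_succ, hc, one_mul, unitriangularSolve,
    Fin.sum_univ_eq_sum_range (fun k => c n k * unitriangularSolve c e k), add_sub_cancel]

theorem eq_unitriangularSolve (hc : ∀ n, c n n = 1) {b : ℕ → R}
    (hb : ∀ n, ∑ k ∈ range (n + 1), c n k * b k = e n) : b = unitriangularSolve c e := by
  funext n
  induction n using Nat.strong_induction_on with
  | _ n ih =>
    have h := (hb n).trans (sum_range_mul_unitriangularSolve e hc n).symm
    rw [sum_range_succ, sum_range_succ, hc, one_mul, one_mul,
      sum_congr rfl fun k hk => by rw [ih k (mem_range.mp hk)]] at h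
    exact add_left_cancel h

theorem existsUnique_sum_range_mul_eq (hc : ∀ n, c n n = 1) :
    ∃! b : ℕ → R, ∀ n, ∑ k ∈ range (n + 1), c n k * b k = e n :=
  ⟨unitriangularSolve c e, sum_range_mul_unitriangularSolve e hc,
    fun _ hb => eq_unitriangularSolve e hc hb⟩

end Unitriangular

namespace PowerSeries

variable {R : Type*} [Semiring R]

theorem mk_bijective : Function.Bijective (mk : (ℕ → R) → R⟦X⟧) :=
  ⟨fun _ _ h => funext fun n => by simpa using congrArg (coeff n) h,
    fun p => ⟨fun n => coeff n p, by ext; simp⟩⟩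

theorem sum_range_coeff_mul_C_mul_X_pow (g : ℕ → R⟦X⟧) (b : ℕ → R) (n : ℕ) :
    ∑ k ∈ range (n + 1), coeff n (g k * C (b k) * X ^ k) =
      ∑ k ∈ range (n + 1), coeff (n - k) (g k) * b k :=
  sum_congr rfl fun k hk => by
    rw [coeff_mul_X_pow', if_pos (Nat.lt_succ_iff.mp (mem_range.mp hk)), coeff_mul_C]

end PowerSeries

theorem inverse_series_exists_unique_general (R : Type*) [CommRing R]
    (f : PowerSeries R) (h0 : coeff (R := R) 0 f = 1) (h1 : coeff (R := R) 1 f = 0) :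
    (∃! b : PowerSeries R, ∀ n : ℕ,
        (∑ k ∈ Finset.range (n + 1),
          coeff (R := R) n (f ^ (2 * k + 1) * PowerSeries.C (R := R) (coeff (R := R) k b) * X ^ k)) =
        if n = 0 then 1 else 0) ∧
    (∀ b : PowerSeries R,
      (∀ n : ℕ,
        (∑ k ∈ Finset.range (n + 1),
          coeff (R := R) n (f ^ (2 * k + 1) * PowerSeries.C (R := R) (coeff (R := R) k b) * X ^ k)) =
        if n = 0 then 1 else 0) →
      coeff (R := R) 0 b = 1 ∧ coeff (R := R) 1 b = 0 ∧
        coeff (R := R) 2 b = -coeff (R := R) 2 f ∧ coeff (R := R) 3 b = -coeff (R := R) 3 f) := by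
  have hconst : constantCoeff f = 1 := by rwa [← coeff_zero_eq_constantCoeff_apply]
  have hpow0 (m : ℕ) : coeff 0 (f ^ m) = 1 := by simp [hconst]
  have hpow1 (m : ℕ) : coeff 1 (f ^ m) = 0 := by simp [coeff_one_pow, h1]
  simp only [sum_range_coeff_mul_C_mul_X_pow]
  refine ⟨?_, fun b hb => ?_⟩
  · rw [mk_bijective.existsUnique_iff]
    simpa only [coeff_mk] using existsUnique_sum_range_mul_eq _
      (c := fun n k => coeff (n - k) (f ^ (2 * k + 1))) fun n => by simp [hpow0]
  · have e0 := hb 0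
    have e1 := hb 1
    have e2 := hb 2
    have e3 := hb 3
    norm_num [sum_range_succ, hpow0, hpow1, h1] at e0 e1 e2 e3
    rw [coeff_zero_eq_constantCoeff_apply]
    refine ⟨e0, e1, ?_, ?_⟩
    · linear_combination e2 - coeff 2 f * e0
    · linear_combination e3 - coeff 3 f * e0 - coeff 2 (f ^ 3) * e1

/-- Let `f = Σ a_k t^k` over a commutative `ℚ`-algebra with `a_0 = 1`, `a_1 = 0`. There
is a unique power series `b` with `Σ_k f^{2k+1} b_k t^k = 1` degreewise, and it
satisfies `b_0 = 1`, `b_1 = 0`, `b_2 = -a_2`, `b_3 = -a_3`. -/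
theorem inverse_series_exists_unique (R : Type*) [CommRing R] [Algebra ℚ R]
    (f : PowerSeries R) (h0 : coeff (R := R) 0 f = 1) (h1 : coeff (R := R) 1 f = 0) :
    (∃! b : PowerSeries R, ∀ n : ℕ,
        (∑ k ∈ Finset.range (n + 1),
          coeff (R := R) n (f ^ (2 * k + 1) * PowerSeries.C (R := R) (coeff (R := R) k b) * X ^ k)) =
        if n = 0 then 1 else 0) ∧
    (∀ b : PowerSeries R,
      (∀ n : ℕ,
        (∑ k ∈ Finset.range (n + 1),
          coeff (R := R) n (f ^ (2 * k + 1) * PowerSeries.C (R := R) (coeff (R := R) k b) * X ^ k)) =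
        if n = 0 then 1 else 0) →
      coeff (R := R) 0 b = 1 ∧ coeff (R := R) 1 b = 0 ∧
        coeff (R := R) 2 b = -coeff (R := R) 2 f ∧ coeff (R := R) 3 b = -coeff (R := R) 3 f) :=
  inverse_series_exists_unique_general R f h0 h1
end

section
/- Define D(k) = (6k-1)!·2^{6k-1} for 1 ≤ k ≤ 3, and D(k) = (2!·3!···(2k-4)!)·(2k-4)!·3²·(6k-1)!·2^{4k+3} for k ≥ 4. Then for all positive integers k₁ and k₂, the product D(k₁)·D(k₂) divides D(k₁+k₂). -/
/-- The product of factorials `2!·3!···m!` (equal to `1` for `m < 2`). -/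
def facProd (m : ℕ) : ℕ := ∏ i ∈ Finset.Icc 2 m, Nat.factorial i

/-- `D(k)`: `(6k-1)!·2^{6k-1}` for `k ≤ 3`, and
`(2!·3!···(2k-4)!)·(2k-4)!·3²·(6k-1)!·2^{4k+3}` for `k ≥ 4`. -/
def D (k : ℕ) : ℕ :=
  if k ≤ 3 then Nat.factorial (6 * k - 1) * 2 ^ (6 * k - 1)
  else facProd (2 * k - 4) * Nat.factorial (2 * k - 4) * 3 ^ 2 *
    Nat.factorial (6 * k - 1) * 2 ^ (4 * k + 3)

/-- The two-leg denominator bound `D(2;2k+1) = (2!···(2k)!)·((2k)(2k-1)(2k-2))·(6k-1)!·2^{4k-1}`. -/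
def D2 (k : ℕ) : ℕ :=
  facProd (2 * k) * Nat.descFactorial (2 * k) 3 * Nat.factorial (6 * k - 1) * 2 ^ (4 * k - 1)

lemma facProd_Ioc (m : ℕ) : facProd m = ∏ i ∈ Finset.Ioc 1 m, Nat.factorial i := by
  unfold facProd; congr 1

lemma facProd_split {m n : ℕ} (h1 : 1 ≤ m) (h2 : m ≤ n) :
    facProd n = facProd m * ∏ i ∈ Finset.Ioc m n, Nat.factorial i := by
  rw [facProd_Ioc, facProd_Ioc, Finset.prod_Ioc_consecutive _ h1 h2]

lemma facProd_succ (n : ℕ) : facProd (n + 1) = facProd n * Nat.factorial (n + 1) := by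
  rcases Nat.eq_zero_or_pos n with rfl | hn
  · rfl
  · rw [facProd_split hn (Nat.le_succ n)]
    congr 1
    rw [show Finset.Ioc n (n+1) = {n+1} by ext i; simp [Finset.mem_Ioc],
      Finset.prod_singleton]

lemma facProd_dvd_prod_Ioc (c t : ℕ) (ht : 1 ≤ t) :
    facProd t ∣ ∏ i ∈ Finset.Ioc c (c + t), Nat.factorial i := by
  have h0 : facProd t = ∏ j ∈ Finset.Ioc 0 t, Nat.factorial j := by
    rw [facProd_Ioc, ← Finset.prod_Ioc_consecutive _ (Nat.zero_le 1) ht]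
    simp
  have h2 := Finset.map_add_left_Ioc 0 t c
  rw [add_zero] at h2
  have h1 : ∏ i ∈ Finset.Ioc c (c + t), Nat.factorial i
      = ∏ j ∈ Finset.Ioc 0 t, Nat.factorial (c + j) := by
    rw [← h2, Finset.prod_map]
    simp [addLeftEmbedding]
  rw [h0, h1]
  exact Finset.prod_dvd_prod_of_dvd _ _ fun j _ =>
    Nat.factorial_dvd_factorial (Nat.le_add_left _ _)

lemma pow2_dvd_prod_Ioc (a t e : ℕ) (ha : 3 ≤ a) (he : e ≤ 3 * t) :
    2 ^ e ∣ ∏ i ∈ Finset.Ioc a (a + t), Nat.factorial i := by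
  calc (2:ℕ) ^ e ∣ 2 ^ (3 * t) := pow_dvd_pow _ he
    _ = ∏ i ∈ Finset.Ioc a (a + t), 2 ^ 3 := by
        rw [Finset.prod_const, Nat.card_Ioc, ← pow_mul]
        congr 1; omega
    _ ∣ _ := by
        refine Finset.prod_dvd_prod_of_dvd _ _ fun i hi => ?_
        simp only [Finset.mem_Ioc] at hi
        calc (2:ℕ) ^ 3 ∣ Nat.factorial 4 := by decide
          _ ∣ Nat.factorial i := Nat.factorial_dvd_factorial (by omega)

lemma D_small_mul_D_big (c m : ℕ) (hc1 : 1 ≤ c) (hc3 : c ≤ 3) :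
    D c * D (m + 4) ∣ D (c + (m + 4)) := by
  have hDc : D c = Nat.factorial (6*c-1) * 2^(6*c-1) := by
    rw [D, if_pos hc3]
  have e1 : 2*(m+4)-4 = 2*m+4 := by omega
  have e2 : 6*(m+4)-1 = 6*m+23 := by omega
  have e3 : 4*(m+4)+3 = 4*m+19 := by omega
  have hDk : D (m+4) = facProd (2*m+4) * Nat.factorial (2*m+4) * 3^2 *
      Nat.factorial (6*m+23) * 2^(4*m+19) := by
    rw [D, if_neg (by omega), e1, e2, e3]
  have f1 : 2*(c+(m+4))-4 = 2*m+4+2*c := by omega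
  have f2 : 6*(c+(m+4))-1 = 6*c+(6*m+23) := by omega
  have f3 : 4*(c+(m+4))+3 = 4*c+(4*m+19) := by omega
  have hDs : D (c+(m+4)) = facProd (2*m+4+2*c) * Nat.factorial (2*m+4+2*c) * 3^2 *
      Nat.factorial (6*c+(6*m+23)) * 2^(4*c+(4*m+19)) := by
    rw [D, if_neg (by omega), f1, f2, f3]
  have hsplit : facProd (2*m+4+2*c) = facProd (2*m+4) * (∏ i ∈ Finset.Ioc (2*m+4) (2*m+4+2*c), Nat.factorial i) :=
    facProd_split (by omega) (by omega)
  have hpow : (2:ℕ)^(2*c-1) * 2^(4*c+(4*m+19)) = 2^(6*c-1) * 2^(4*m+19) := by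
    have h : (2*c-1)+(4*c+(4*m+19)) = (6*c-1)+(4*m+19) := by omega
    rw [← pow_add, ← pow_add, h]
  have hQd : (2:ℕ)^(2*c-1) ∣ ∏ i ∈ Finset.Ioc (2*m+4) (2*m+4+2*c), Nat.factorial i := pow2_dvd_prod_Ioc (2*m+4) (2*c) (2*c-1) (by omega) (by omega)
  have hfacd : Nat.factorial (2*m+4) ∣ Nat.factorial (2*m+4+2*c) :=
    Nat.factorial_dvd_factorial (by omega)
  have hff : Nat.factorial (6*c-1) * Nat.factorial (6*m+23) ∣
      Nat.factorial (6*c+(6*m+23)) :=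
    (Nat.factorial_mul_factorial_dvd_factorial_add _ _).trans
      (Nat.factorial_dvd_factorial (by omega))
  calc D c * D (m+4)
      = facProd (2*m+4) * 2^(2*c-1) * Nat.factorial (2*m+4) * 3^2 *
          (Nat.factorial (6*c-1) * Nat.factorial (6*m+23)) * 2^(4*c+(4*m+19)) := by
        rw [hDc, hDk]
        calc Nat.factorial (6*c-1) * 2^(6*c-1) * (facProd (2*m+4) * Nat.factorial (2*m+4)
              * 3^2 * Nat.factorial (6*m+23) * 2^(4*m+19))
            = (2^(6*c-1) * 2^(4*m+19)) * (facProd (2*m+4) * Nat.factorial (2*m+4) * 3^2 *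
              (Nat.factorial (6*c-1) * Nat.factorial (6*m+23))) := by ring
          _ = (2^(2*c-1) * 2^(4*c+(4*m+19))) * (facProd (2*m+4) * Nat.factorial (2*m+4) * 3^2 *
              (Nat.factorial (6*c-1) * Nat.factorial (6*m+23))) := by rw [hpow]
          _ = _ := by ring
    _ ∣ facProd (2*m+4) * (∏ i ∈ Finset.Ioc (2*m+4) (2*m+4+2*c), Nat.factorial i) * Nat.factorial (2*m+4+2*c) * 3^2 *
          Nat.factorial (6*c+(6*m+23)) * 2^(4*c+(4*m+19)) :=
        mul_dvd_mul (mul_dvd_mul (mul_dvd_mul (mul_dvd_mul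
          (mul_dvd_mul dvd_rfl hQd) hfacd) dvd_rfl) hff) dvd_rfl
    _ = D (c+(m+4)) := by rw [hDs, hsplit]

lemma D_big_mul_D_big (m₁ m₂ : ℕ) :
    D (m₁ + 4) * D (m₂ + 4) ∣ D ((m₁ + 4) + (m₂ + 4)) := by
  have hD : ∀ m : ℕ, D (m+4) = facProd (2*m+4) * Nat.factorial (2*m+4) * 3^2 *
      Nat.factorial (6*m+23) * 2^(4*m+19) := by
    intro m
    rw [D, if_neg (by omega), show 2*(m+4)-4 = 2*m+4 by omega,
      show 6*(m+4)-1 = 6*m+23 by omega, show 4*(m+4)+3 = 4*m+19 by omega]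
  have hDs : D ((m₁+4)+(m₂+4)) = facProd (2*m₁+4+(2*m₂+8)) *
      Nat.factorial (2*m₁+4+(2*m₂+8)) * 3^2 *
      Nat.factorial (6*m₁+6*m₂+47) * 2^(4*m₁+4*m₂+35) := by
    rw [D, if_neg (by omega), show 2*((m₁+4)+(m₂+4))-4 = 2*m₁+4+(2*m₂+8) by omega,
      show 6*((m₁+4)+(m₂+4))-1 = 6*m₁+6*m₂+47 by omega,
      show 4*((m₁+4)+(m₂+4))+3 = 4*m₁+4*m₂+35 by omega]
  have hsplit : facProd (2*m₁+4+(2*m₂+8)) = facProd (2*m₁+4) * (∏ i ∈ Finset.Ioc (2*m₁+4) (2*m₁+4+(2*m₂+8)), Nat.factorial i) :=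
    facProd_split (by omega) (by omega)
  -- facProd (2m₂+6) = facProd (2m₂+4) * (2m₂+5)! * (2m₂+6)!
  have efp : facProd (2*m₂+6) = facProd (2*m₂+4) * Nat.factorial (2*m₂+5) *
      Nat.factorial (2*m₂+6) := by
    have a := facProd_succ (2*m₂+4)
    have b := facProd_succ (2*m₂+5)
    rw [show 2*m₂+4+1 = 2*m₂+5 by omega] at a
    rw [show 2*m₂+5+1 = 2*m₂+6 by omega] at b
    rw [b, a]
  have h72 : (3^2 * 2^3 : ℕ) ∣ Nat.factorial (2*m₂+6) := by
    calc (3^2 * 2^3 : ℕ) ∣ Nat.factorial 6 := by decide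
      _ ∣ _ := Nat.factorial_dvd_factorial (by omega)
  have step1 : facProd (2*m₂+4) * Nat.factorial (2*m₂+4) * (3^2 * 2^3) ∣
      facProd (2*m₂+6) := by
    rw [efp]
    exact mul_dvd_mul (mul_dvd_mul dvd_rfl
      (Nat.factorial_dvd_factorial (by omega))) h72
  have step2 : facProd (2*m₂+6) ∣ facProd (2*m₂+8) :=
    ⟨_, facProd_split (by omega) (by omega)⟩
  have hQd : facProd (2*m₂+4) * Nat.factorial (2*m₂+4) * (3^2 * 2^3) ∣ ∏ i ∈ Finset.Ioc (2*m₁+4) (2*m₁+4+(2*m₂+8)), Nat.factorial i :=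
    (step1.trans step2).trans (facProd_dvd_prod_Ioc (2*m₁+4) (2*m₂+8) (by omega))
  have hfacd : Nat.factorial (2*m₁+4) ∣ Nat.factorial (2*m₁+4+(2*m₂+8)) :=
    Nat.factorial_dvd_factorial (by omega)
  have hff : Nat.factorial (6*m₁+23) * Nat.factorial (6*m₂+23) ∣
      Nat.factorial (6*m₁+6*m₂+47) :=
    (Nat.factorial_mul_factorial_dvd_factorial_add _ _).trans
      (Nat.factorial_dvd_factorial (by omega))
  calc D (m₁+4) * D (m₂+4)
      = facProd (2*m₁+4) * (facProd (2*m₂+4) * Nat.factorial (2*m₂+4) * (3^2 * 2^3)) *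
          Nat.factorial (2*m₁+4) * 3^2 *
          (Nat.factorial (6*m₁+23) * Nat.factorial (6*m₂+23)) * 2^(4*m₁+4*m₂+35) := by
        rw [hD m₁, hD m₂]; ring
    _ ∣ facProd (2*m₁+4) * (∏ i ∈ Finset.Ioc (2*m₁+4) (2*m₁+4+(2*m₂+8)), Nat.factorial i) * Nat.factorial (2*m₁+4+(2*m₂+8)) * 3^2 *
          Nat.factorial (6*m₁+6*m₂+47) * 2^(4*m₁+4*m₂+35) :=
        mul_dvd_mul (mul_dvd_mul (mul_dvd_mul (mul_dvd_mul
          (mul_dvd_mul dvd_rfl hQd) hfacd) dvd_rfl) hff) dvd_rfl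
    _ = D ((m₁+4)+(m₂+4)) := by rw [hDs, hsplit]

/-- `D(k₁)·D(k₂)` divides `D(k₁+k₂)` for all positive `k₁, k₂`. -/
theorem D_mul_D_dvd (k₁ k₂ : ℕ) (h₁ : 1 ≤ k₁) (h₂ : 1 ≤ k₂) :
    D k₁ * D k₂ ∣ D (k₁ + k₂) := by
  wlog hle : k₁ ≤ k₂ with H
  · rw [mul_comm, Nat.add_comm]
    exact H k₂ k₁ h₂ h₁ (le_of_not_ge hle)
  by_cases hk₂ : k₂ ≤ 3
  · interval_cases k₂ <;> interval_cases k₁ <;> decide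
  · push_neg at hk₂
    obtain ⟨m₂, rfl⟩ : ∃ m, k₂ = m + 4 := ⟨k₂ - 4, by omega⟩
    by_cases hk₁ : k₁ ≤ 3
    · exact D_small_mul_D_big k₁ m₂ h₁ hk₁
    · push_neg at hk₁
      obtain ⟨m₁, rfl⟩ : ∃ m, k₁ = m + 4 := ⟨k₁ - 4, by omega⟩
      exact D_big_mul_D_big m₁ m₂
end

section
/- Define D(2;2k+1) = (2!·3!···(2k)!)·((2k)!/(2k-3)!)·(6k-1)!·2^{4k-1} for k ≥ 2, and D(k) as: (6k-1)!·2^{6k-1} for 1 ≤ k ≤ 3 and (2!·3!···(2k-4)!)·(2k-4)!·3²·(6k-1)!·2^{4k+3} for k ≥ 4. Then for all integers k₂ ≥ k₁ ≥ 2, the product D(2;2k₁+1)·D(2;2k₂+1) divides D(k₁+k₂). -/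
open Nat

lemma facProd_succ_top (n : ℕ) (h : 1 ≤ n) :
    facProd (n + 1) = facProd n * (n + 1)! := by
  unfold facProd
  rw [Finset.prod_Icc_succ_top (by omega)]

lemma facProd_core (c a b : ℕ) (ha : c ≤ a) (hb : c ≤ b) (hc : 2 ≤ c) :
    facProd a * facProd b ∣ facProd c * facProd (a + (b - c)) := by
  induction a, ha using Nat.le_induction with
  | base =>
      rw [Nat.add_sub_cancel' hb]
  | succ a ha ih =>
      have h1 : a + 1 + (b - c) = (a + (b - c)) + 1 := by omega
      rw [facProd_succ_top a (by omega), h1, facProd_succ_top (a + (b - c)) (by omega)]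
      calc facProd a * (a + 1)! * facProd b
          = (facProd a * facProd b) * (a + 1)! := by ring
        _ ∣ (facProd c * facProd (a + (b - c))) * (a + (b - c) + 1)! :=
            mul_dvd_mul ih (Nat.factorial_dvd_factorial (by omega))
        _ = facProd c * (facProd (a + (b - c)) * (a + (b - c) + 1)!) := by ring

lemma desc3 (n : ℕ) : Nat.descFactorial (n + 2) 3 = (n + 2) * (n + 1) * n := by
  have h1 : n + 2 - 1 = n + 1 := by omega
  have h2 : n + 2 - 2 = n := by omega
  simp [Nat.descFactorial_succ, Nat.descFactorial_zero, h1, h2]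
  ring

lemma desc5 (n : ℕ) : Nat.descFactorial (n + 4) 5 = (n + 4) * (n + 3) * (n + 2) * (n + 1) * n := by
  have h1 : n + 4 - 1 = n + 3 := by omega
  have h2 : n + 4 - 2 = n + 2 := by omega
  have h3 : n + 4 - 3 = n + 1 := by omega
  have h4 : n + 4 - 4 = n := by omega
  simp [Nat.descFactorial_succ, Nat.descFactorial_zero, h1, h2, h3, h4]
  ring

lemma desc_dvd_fact {n k : ℕ} (h : k ≤ n) : Nat.descFactorial n k ∣ n ! :=
  Dvd.intro_left _ (Nat.factorial_mul_descFactorial h)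

lemma fact_eq (a b : ℕ) (h : b = a + 1) : b ! = b * a ! := by
  subst h; exact Nat.factorial_succ a

/-- Master combination lemma. -/
lemma master (k₁ k₂ X : ℕ) (h₁ : 2 ≤ k₁) (h₂ : k₁ ≤ k₂) (hX : 0 < X)
    (hfp : facProd (2 * k₁) * facProd (2 * k₂) * X ∣
      facProd 4 * facProd (2 * (k₁ + k₂) - 4))
    (hmid : Nat.descFactorial (2 * k₁) 3 * Nat.descFactorial (2 * k₂) 3 *
        ((6 * k₁ - 1)! * (6 * k₂ - 1)!) ∣
      X * ((2 * (k₁ + k₂) - 4)! * (6 * (k₁ + k₂) - 1)!)) :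
    D2 k₁ * D2 k₂ ∣ D (k₁ + k₂) := by
  have hk3 : ¬ (k₁ + k₂ ≤ 3) := by omega
  unfold D D2
  rw [if_neg hk3]
  rw [← Nat.mul_dvd_mul_iff_left hX]
  have hpow : (2:ℕ) ^ (4 * k₁ - 1) * 2 ^ (4 * k₂ - 1) = 2 ^ (4 * (k₁ + k₂) - 2) := by
    rw [← pow_add]
    congr 1
    omega
  have hpow2 : (2:ℕ) ^ (4 * (k₁ + k₂) + 3) = 2 ^ 5 * 2 ^ (4 * (k₁ + k₂) - 2) := by
    rw [← pow_add]
    congr 1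
    omega
  have h288 : facProd 4 = 288 := by decide
  calc X * (facProd (2 * k₁) * Nat.descFactorial (2 * k₁) 3 * (6 * k₁ - 1)! * 2 ^ (4 * k₁ - 1) *
        (facProd (2 * k₂) * Nat.descFactorial (2 * k₂) 3 * (6 * k₂ - 1)! * 2 ^ (4 * k₂ - 1)))
      = (facProd (2 * k₁) * facProd (2 * k₂) * X) *
        (Nat.descFactorial (2 * k₁) 3 * Nat.descFactorial (2 * k₂) 3 *
          ((6 * k₁ - 1)! * (6 * k₂ - 1)!)) * 2 ^ (4 * (k₁ + k₂) - 2) := by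
        rw [← hpow]; ring
    _ ∣ (facProd 4 * facProd (2 * (k₁ + k₂) - 4)) *
        (X * ((2 * (k₁ + k₂) - 4)! * (6 * (k₁ + k₂) - 1)!)) * 2 ^ (4 * (k₁ + k₂) - 2) :=
        mul_dvd_mul (mul_dvd_mul hfp hmid) dvd_rfl
    _ = X * (facProd (2 * (k₁ + k₂) - 4) * (2 * (k₁ + k₂) - 4)! * 3 ^ 2 *
        (6 * (k₁ + k₂) - 1)! * 2 ^ (4 * (k₁ + k₂) + 3)) := by
        rw [hpow2, h288]; ring

/-- For `k₂ ≥ k₁ ≥ 2`, `D(2;2k₁+1)·D(2;2k₂+1)` divides `D(k₁+k₂)`. -/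
theorem D2_mul_D2_dvd (k₁ k₂ : ℕ) (h₁ : 2 ≤ k₁) (h₂ : k₁ ≤ k₂) :
    D2 k₁ * D2 k₂ ∣ D (k₁ + k₂) := by
  rcases lt_or_ge k₂ (k₁ + 2) with hlt | hge
  · -- k₂ = k₁ or k₂ = k₁ + 1
    rcases Nat.lt_or_ge k₂ (k₁ + 1) with heq | hsucc
    · -- k₂ = k₁
      have hk : k₂ = k₁ := by omega
      subst hk
      rcases Nat.lt_or_ge k₂ 4 with hsmall | hbig
      · -- k₂ = 2 or 3 : numeric
        interval_cases k₂
        · exact ⟨676039, by decide⟩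
        · exact ⟨537886899285120, by decide⟩
      · -- k₂ = m + 4
        obtain ⟨m, rfl⟩ : ∃ m, k₂ = m + 4 := ⟨k₂ - 4, by omega⟩
        apply master _ _ (2 * m + 7) h₁ h₂ (by omega)
        · -- facProd part with slack factor 2m+7
          have step1 : facProd (2 * (m + 4)) * facProd (2 * (m + 4)) ∣
              facProd 5 * facProd (2 * (m + 4) + (2 * (m + 4) - 5)) :=
            facProd_core 5 _ _ (by omega) (by omega) (by omega)
          have e1 : 2 * (m + 4) + (2 * (m + 4) - 5) = (4 * m + 11) := by omega
          rw [e1] at step1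
          have e5 : facProd 5 = facProd 4 * 120 := by
            have := facProd_succ_top 4 (by omega)
            norm_num [Nat.factorial] at this
            norm_num [this]
          have e6 : facProd (2 * (m + 4 + (m + 4)) - 4) = facProd (4 * m + 11) * (4 * m + 12)! := by
            have := facProd_succ_top (4 * m + 11) (by omega)
            rw [show 2 * (m + 4 + (m + 4)) - 4 = 4 * m + 11 + 1 by omega, this]
          have h5 : (120 : ℕ) * (2 * m + 7) ∣ (4 * m + 12)! := by
            have h120 : (120 : ℕ) ∣ (2 * m + 6)! := by
              have : (120 : ℕ) = (5)! := by norm_num [Nat.factorial]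
              rw [this]
              exact Nat.factorial_dvd_factorial (by omega)
            have h7 : (120 : ℕ) * (2 * m + 7) ∣ (2 * m + 6)! * (2 * m + 7) :=
              mul_dvd_mul_right h120 _
            have e7 : (2 * m + 6)! * (2 * m + 7) = (2 * m + 7)! := by
              rw [fact_eq (2 * m + 6) (2 * m + 7) (by omega)]; ring
            rw [e7] at h7
            exact h7.trans (Nat.factorial_dvd_factorial (by omega))
          calc facProd (2 * (m + 4)) * facProd (2 * (m + 4)) * (2 * m + 7)
              ∣ (facProd 5 * facProd (4 * m + 11)) * (2 * m + 7) :=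
                mul_dvd_mul_right step1 _
            _ = facProd 4 * facProd (4 * m + 11) * (120 * (2 * m + 7)) := by rw [e5]; ring
            _ ∣ facProd 4 * facProd (4 * m + 11) * (4 * m + 12)! :=
                mul_dvd_mul_left _ h5
            _ = facProd 4 * facProd (2 * (m + 4 + (m + 4)) - 4) := by rw [e6]; ring
        · -- middle part
          have ed : Nat.descFactorial (2 * (m + 4)) 3 = (2 * m + 8) * (2 * m + 7) * (2 * m + 6) := by
            rw [show 2 * (m + 4) = (2 * m + 6) + 2 by omega, desc3]
          have e1 : (2 * (m + 4 + (m + 4)) - 4) = 4 * m + 12 := by omega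
          have e2 : (6 * (m + 4 + (m + 4)) - 1) = 12 * m + 47 := by omega
          have e3 : (6 * (m + 4) - 1) = 6 * m + 23 := by omega
          rw [ed, e1, e2, e3]
          have hA : (2 * m + 8) * (2 * m + 7) * (2 * m + 6) * (2 * m + 6) ∣ (4 * m + 12)! := by
            have h1 : (2 * m + 8) * (2 * m + 7) * (2 * m + 6) ∣ (4 * m + 11)! := by
              have : (2 * m + 8) * (2 * m + 7) * (2 * m + 6) = Nat.descFactorial (2 * m + 8) 3 := by
                rw [show 2 * m + 8 = (2 * m + 6) + 2 by omega, desc3]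
              rw [this]
              exact (desc_dvd_fact (by omega)).trans (Nat.factorial_dvd_factorial (by omega))
            have h2 : (2 * m + 6 : ℕ) ∣ (4 * m + 12) := ⟨2, by ring⟩
            calc (2 * m + 8) * (2 * m + 7) * (2 * m + 6) * (2 * m + 6)
                ∣ (4 * m + 11)! * (4 * m + 12) := mul_dvd_mul h1 h2
              _ = (4 * m + 12)! := by
                  rw [fact_eq (4 * m + 11) (4 * m + 12) (by omega)]; ring
          have hB : (2 * m + 8) * ((6 * m + 23)! * (6 * m + 23)!) ∣ (12 * m + 47)! := by
            have h1 : (2 * m + 8) * (6 * m + 23)! ∣ (6 * m + 24)! := by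
              rw [fact_eq (6 * m + 23) (6 * m + 24) (by omega)]
              exact mul_dvd_mul_right ⟨3, by omega⟩ _
            calc (2 * m + 8) * ((6 * m + 23)! * (6 * m + 23)!)
                = ((2 * m + 8) * (6 * m + 23)!) * (6 * m + 23)! := by ring
              _ ∣ (6 * m + 24)! * (6 * m + 23)! := mul_dvd_mul_right h1 _
              _ ∣ (12 * m + 47)! := by
                  have := Nat.factorial_mul_factorial_dvd_factorial_add (6 * m + 24) (6 * m + 23)
                  rwa [show 6 * m + 24 + (6 * m + 23) = 12 * m + 47 by omega] at this
          calc (2 * m + 8) * (2 * m + 7) * (2 * m + 6) * ((2 * m + 8) * (2 * m + 7) * (2 * m + 6)) *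
                ((6 * m + 23)! * (6 * m + 23)!)
              = (2 * m + 7) * (((2 * m + 8) * (2 * m + 7) * (2 * m + 6) * (2 * m + 6)) *
                ((2 * m + 8) * ((6 * m + 23)! * (6 * m + 23)!))) := by ring
            _ ∣ (2 * m + 7) * ((4 * m + 12)! * (12 * m + 47)!) :=
                mul_dvd_mul_left _ (mul_dvd_mul hA hB)
    · -- k₂ = k₁ + 1
      have hk : k₂ = k₁ + 1 := by omega
      subst hk
      obtain ⟨m, rfl⟩ : ∃ m, k₁ = m + 2 := ⟨k₁ - 2, by omega⟩
      apply master _ _ 1 h₁ h₂ one_pos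
      · rw [mul_one, show 2 * (m + 2 + (m + 2 + 1)) - 4 = 2 * (m + 2) + (2 * (m + 2 + 1) - 4) by omega]
        exact facProd_core 4 _ _ (by omega) (by omega) (by omega)
      · have ed1 : Nat.descFactorial (2 * (m + 2)) 3 = (2 * m + 4) * (2 * m + 3) * (2 * m + 2) := by
          rw [show 2 * (m + 2) = (2 * m + 2) + 2 by omega, desc3]
        have ed2 : Nat.descFactorial (2 * (m + 2 + 1)) 3 = (2 * m + 6) * (2 * m + 5) * (2 * m + 4) := by
          rw [show 2 * (m + 2 + 1) = (2 * m + 4) + 2 by omega, desc3]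
        have e1 : (2 * (m + 2 + (m + 2 + 1)) - 4) = 4 * m + 6 := by omega
        have e2 : (6 * (m + 2 + (m + 2 + 1)) - 1) = 12 * m + 29 := by omega
        have e3 : (6 * (m + 2) - 1) = 6 * m + 11 := by omega
        have e4 : (6 * (m + 2 + 1) - 1) = 6 * m + 17 := by omega
        rw [ed1, ed2, e1, e2, e3, e4, one_mul]
        have hA : (2 * m + 6) * (2 * m + 5) * (2 * m + 4) * (2 * m + 3) * (2 * m + 2) ∣
            (4 * m + 6)! := by
          have : (2 * m + 6) * (2 * m + 5) * (2 * m + 4) * (2 * m + 3) * (2 * m + 2)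
              = Nat.descFactorial (2 * m + 6) 5 := by
            rw [show 2 * m + 6 = (2 * m + 2) + 4 by omega, desc5]
          rw [this]
          exact (desc_dvd_fact (by omega)).trans (Nat.factorial_dvd_factorial (by omega))
        have hB : (2 * m + 4) * ((6 * m + 11)! * (6 * m + 17)!) ∣ (12 * m + 29)! := by
          have h1 : (2 * m + 4) * (6 * m + 11)! ∣ (6 * m + 12)! := by
            rw [fact_eq (6 * m + 11) (6 * m + 12) (by omega)]
            exact mul_dvd_mul_right ⟨3, by omega⟩ _
          calc (2 * m + 4) * ((6 * m + 11)! * (6 * m + 17)!)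
              = ((2 * m + 4) * (6 * m + 11)!) * (6 * m + 17)! := by ring
            _ ∣ (6 * m + 12)! * (6 * m + 17)! := mul_dvd_mul_right h1 _
            _ ∣ (12 * m + 29)! := by
                have := Nat.factorial_mul_factorial_dvd_factorial_add (6 * m + 12) (6 * m + 17)
                rwa [show 6 * m + 12 + (6 * m + 17) = 12 * m + 29 by omega] at this
        calc (2 * m + 4) * (2 * m + 3) * (2 * m + 2) *
              ((2 * m + 6) * (2 * m + 5) * (2 * m + 4)) * ((6 * m + 11)! * (6 * m + 17)!)
            = ((2 * m + 6) * (2 * m + 5) * (2 * m + 4) * (2 * m + 3) * (2 * m + 2)) *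
              ((2 * m + 4) * ((6 * m + 11)! * (6 * m + 17)!)) := by ring
          _ ∣ (4 * m + 6)! * (12 * m + 29)! := mul_dvd_mul hA hB
  · -- k₂ ≥ k₁ + 2
    apply master _ _ 1 h₁ h₂ one_pos
    · rw [mul_one, show 2 * (k₁ + k₂) - 4 = 2 * k₁ + (2 * k₂ - 4) by omega]
      exact facProd_core 4 _ _ (by omega) (by omega) (by omega)
    · rw [one_mul]
      have hA : Nat.descFactorial (2 * k₁) 3 * Nat.descFactorial (2 * k₂) 3 ∣
          (2 * (k₁ + k₂) - 4)! := by
        have hd1 : Nat.descFactorial (2 * k₁) 3 ∣ (2 * k₂ - 3)! :=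
          (desc_dvd_fact (by omega)).trans (Nat.factorial_dvd_factorial (by omega))
        have h2 : Nat.descFactorial (2 * k₁) 3 * Nat.descFactorial (2 * k₂) 3 ∣
            (2 * k₂ - 3)! * Nat.descFactorial (2 * k₂) 3 := mul_dvd_mul_right hd1 _
        rw [Nat.factorial_mul_descFactorial (show 3 ≤ 2 * k₂ by omega)] at h2
        exact h2.trans (Nat.factorial_dvd_factorial (by omega))
      have hB : (6 * k₁ - 1)! * (6 * k₂ - 1)! ∣ (6 * (k₁ + k₂) - 1)! :=
        (Nat.factorial_mul_factorial_dvd_factorial_add _ _).trans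
          (Nat.factorial_dvd_factorial (by omega))
      exact mul_dvd_mul hA hB
end

section
/- With D(k) and d(n) as defined in the paper (D(k) = (6k-1)!·2^{6k-1} for 1 ≤ k ≤ 3, D(k) = (2!···(2k-4)!)·(2k-4)!·3²·(6k-1)!·2^{4k+3} for k ≥ 4; d given piecewise with d(n) = (3n-4)!·2^{3n-4} for 3 ≤ n ≤ 8, and the two factorial-product formulas for odd n ≥ 9 and even n ≥ 10), for every integer k ≥ 2: 24·D(k) divides d(2k+2), and for all integers k ≥ 2 and r ≥ 3, (3r-4)!·2^{3r-4}·D(k) divides d(2k+r). -/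
/-- `d(n)` : `(3n-4)!·2^{3n-4}` for `3 ≤ n ≤ 8`,
`(2!···(n-5)!)·(n-5)!·3²·(3n-4)!·2^{2n+1}` for odd `n ≥ 9`, and
`(2!···(n-6)!)·(n-6)!·3²·(3n-4)!·2^{2n-1}` for even `n ≥ 10`. -/
def d (n : ℕ) : ℕ :=
  if n ≤ 8 then Nat.factorial (3 * n - 4) * 2 ^ (3 * n - 4)
  else if Odd n then
    facProd (n - 5) * Nat.factorial (n - 5) * 3 ^ 2 * Nat.factorial (3 * n - 4) * 2 ^ (2 * n + 1)
  else
    facProd (n - 6) * Nat.factorial (n - 6) * 3 ^ 2 * Nat.factorial (3 * n - 4) * 2 ^ (2 * n - 1)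

lemma two_dvd_factorial {i : ℕ} (h : 2 ≤ i) : 2 ∣ Nat.factorial i :=
  Nat.dvd_factorial (by norm_num) h

lemma eight_dvd_factorial {i : ℕ} (h : 4 ≤ i) : 8 ∣ Nat.factorial i := by
  have h8 : (8:ℕ) ∣ Nat.factorial 4 := by decide
  exact h8.trans (Nat.factorial_dvd_factorial h)

lemma facProd_dvd {m n : ℕ} (h : m ≤ n) : facProd m ∣ facProd n :=
  Finset.prod_dvd_prod_of_subset _ _ _ (Finset.Icc_subset_Icc_right h)

lemma pow_dvd_facProd (m : ℕ) : 2 ^ (m - 1) ∣ facProd m := by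
  have h : ∏ _i ∈ Finset.Icc 2 m, (2:ℕ) ∣ ∏ i ∈ Finset.Icc 2 m, Nat.factorial i :=
    Finset.prod_dvd_prod_of_dvd _ _ (fun i hi => two_dvd_factorial (Finset.mem_Icc.mp hi).1)
  rw [Finset.prod_const, Nat.card_Icc, (by omega : m + 1 - 2 = m - 1)] at h
  exact h

lemma facProd_tail {s m : ℕ} (h3 : 4 ≤ s) (h : s ≤ m) :
    2 ^ (3 * (m - s)) * facProd s ∣ facProd m := by
  have hIoc : ∀ t : ℕ, Finset.Icc 2 t = Finset.Ioc 1 t := by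
    intro t; ext x; simp only [Finset.mem_Icc, Finset.mem_Ioc]; omega
  have hsplit : facProd m = facProd s * ∏ i ∈ Finset.Ioc s m, Nat.factorial i := by
    rw [facProd, facProd, hIoc, hIoc, Finset.prod_Ioc_consecutive _ (by omega : 1 ≤ s) h]
  have htail : (2:ℕ) ^ (3 * (m - s)) ∣ ∏ i ∈ Finset.Ioc s m, Nat.factorial i := by
    have h8 : ∏ _i ∈ Finset.Ioc s m, (8:ℕ) ∣ ∏ i ∈ Finset.Ioc s m, Nat.factorial i :=
      Finset.prod_dvd_prod_of_dvd _ _ (fun i hi =>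
        eight_dvd_factorial (by have := (Finset.mem_Ioc.mp hi).1; omega))
    rw [Finset.prod_const, Nat.card_Ioc] at h8
    calc (2:ℕ) ^ (3 * (m - s)) = 8 ^ (m - s) := by
          rw [show (8:ℕ) = 2^3 from rfl, ← pow_mul]
      _ ∣ _ := h8
  rw [hsplit, mul_comm (2 ^ (3 * (m - s))) (facProd s)]
  exact mul_dvd_mul_left _ htail

lemma key_odd {a b n : ℕ} (hab : a + b = 3 * n - 5) (hn : 9 ≤ n) :
    Nat.factorial a * 2 ^ a * (Nat.factorial b * 2 ^ b) ∣
      facProd (n - 5) * Nat.factorial (n - 5) * 3 ^ 2 *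
        Nat.factorial (3 * n - 4) * 2 ^ (2 * n + 1) := by
  have h1 : Nat.factorial a * Nat.factorial b ∣ Nat.factorial (3 * n - 4) :=
    (Nat.factorial_mul_factorial_dvd_factorial_add a b).trans
      (Nat.factorial_dvd_factorial (by omega))
  have h2 : (2:ℕ) ^ (n - 6) ∣ facProd (n - 5) := by
    have h := pow_dvd_facProd (n - 5)
    rwa [(by omega : n - 5 - 1 = n - 6)] at h
  have epow : (2:ℕ) ^ (n - 6) * 2 ^ (2 * n + 1) = 2 ^ a * 2 ^ b := by
    rw [← pow_add, ← pow_add]; congr 1; omega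
  have e : Nat.factorial a * 2 ^ a * (Nat.factorial b * 2 ^ b)
      = (Nat.factorial a * Nat.factorial b) * (2 ^ (n - 6) * 2 ^ (2 * n + 1)) := by
    rw [epow]; ring
  rw [e]
  have h3 : (Nat.factorial a * Nat.factorial b) * (2 ^ (n - 6) * 2 ^ (2 * n + 1)) ∣
      (Nat.factorial (3 * n - 4) * (Nat.factorial (n - 5) * 3 ^ 2)) *
        (facProd (n - 5) * 2 ^ (2 * n + 1)) :=
    mul_dvd_mul (h1.mul_right _) (mul_dvd_mul h2 dvd_rfl)
  exact h3.trans (dvd_of_eq (by ring))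

lemma key_even {a b n : ℕ} (hab : a + b = 3 * n - 5) (hn : 10 ≤ n) :
    Nat.factorial a * 2 ^ a * (Nat.factorial b * 2 ^ b) ∣
      facProd (n - 6) * Nat.factorial (n - 6) * 3 ^ 2 *
        Nat.factorial (3 * n - 4) * 2 ^ (2 * n - 1) := by
  have h1 : Nat.factorial a * Nat.factorial b ∣ Nat.factorial (3 * n - 4) :=
    (Nat.factorial_mul_factorial_dvd_factorial_add a b).trans
      (Nat.factorial_dvd_factorial (by omega))
  have h2 : (2:ℕ) ^ (n - 7) ∣ facProd (n - 6) := by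
    have h := pow_dvd_facProd (n - 6)
    rwa [(by omega : n - 6 - 1 = n - 7)] at h
  have h2' : (2:ℕ) ^ 3 ∣ Nat.factorial (n - 6) := eight_dvd_factorial (by omega)
  have epow : (2:ℕ) ^ (n - 7) * 2 ^ 3 * 2 ^ (2 * n - 1) = 2 ^ a * 2 ^ b := by
    rw [← pow_add, ← pow_add, ← pow_add]; congr 1; omega
  have e : Nat.factorial a * 2 ^ a * (Nat.factorial b * 2 ^ b)
      = (Nat.factorial a * Nat.factorial b) * (2 ^ (n - 7) * 2 ^ 3 * 2 ^ (2 * n - 1)) := by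
    rw [epow]; ring
  rw [e]
  have h3 : (Nat.factorial a * Nat.factorial b) * (2 ^ (n - 7) * 2 ^ 3 * 2 ^ (2 * n - 1)) ∣
      (Nat.factorial (3 * n - 4) * 3 ^ 2) *
        (facProd (n - 6) * Nat.factorial (n - 6) * 2 ^ (2 * n - 1)) :=
    mul_dvd_mul (h1.mul_right _) (mul_dvd_mul (mul_dvd_mul h2 h2') dvd_rfl)
  exact h3.trans (dvd_of_eq (by ring))

lemma keyD_odd {k r : ℕ} (hk : 4 ≤ k) (hr : 3 ≤ r) :
    Nat.factorial (3 * r - 4) * 2 ^ (3 * r - 4) *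
      (facProd (2 * k - 4) * Nat.factorial (2 * k - 4) * 3 ^ 2 *
        Nat.factorial (6 * k - 1) * 2 ^ (4 * k + 3)) ∣
    facProd (2 * k + r - 5) * Nat.factorial (2 * k + r - 5) * 3 ^ 2 *
      Nat.factorial (3 * (2 * k + r) - 4) * 2 ^ (2 * (2 * k + r) + 1) := by
  have hfac : Nat.factorial (3 * r - 4) * Nat.factorial (6 * k - 1) ∣
      Nat.factorial (3 * (2 * k + r) - 4) :=
    (Nat.factorial_mul_factorial_dvd_factorial_add _ _).trans
      (Nat.factorial_dvd_factorial (by omega))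
  have hP : (2:ℕ) ^ (r - 2) * facProd (2 * k - 4) ∣ facProd (2 * k + r - 5) := by
    have h := facProd_tail (show 4 ≤ 2 * k - 4 by omega) (show 2 * k - 4 ≤ 2 * k + r - 5 by omega)
    rw [(by omega : 2 * k + r - 5 - (2 * k - 4) = r - 1)] at h
    exact (mul_dvd_mul (pow_dvd_pow 2 (by omega : r - 2 ≤ 3 * (r - 1))) dvd_rfl).trans h
  have hf2 : Nat.factorial (2 * k - 4) ∣ Nat.factorial (2 * k + r - 5) :=
    Nat.factorial_dvd_factorial (by omega)
  have epow : (2:ℕ) ^ (r - 2) * 2 ^ (2 * (2 * k + r) + 1) = 2 ^ (3 * r - 4) * 2 ^ (4 * k + 3) := by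
    rw [← pow_add, ← pow_add]; congr 1; omega
  have e : Nat.factorial (3 * r - 4) * 2 ^ (3 * r - 4) *
      (facProd (2 * k - 4) * Nat.factorial (2 * k - 4) * 3 ^ 2 *
        Nat.factorial (6 * k - 1) * 2 ^ (4 * k + 3))
      = (2 ^ (r - 2) * facProd (2 * k - 4)) * Nat.factorial (2 * k - 4) * 3 ^ 2 *
        (Nat.factorial (3 * r - 4) * Nat.factorial (6 * k - 1)) *
        2 ^ (2 * (2 * k + r) + 1) := by
    rw [show (2:ℕ) ^ (r - 2) * facProd (2 * k - 4) * Nat.factorial (2 * k - 4) * 3 ^ 2 *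
        (Nat.factorial (3 * r - 4) * Nat.factorial (6 * k - 1)) * 2 ^ (2 * (2 * k + r) + 1)
        = facProd (2 * k - 4) * Nat.factorial (2 * k - 4) * 3 ^ 2 *
          (Nat.factorial (3 * r - 4) * Nat.factorial (6 * k - 1)) *
          (2 ^ (r - 2) * 2 ^ (2 * (2 * k + r) + 1)) from by ring, epow]
    ring
  rw [e]
  exact mul_dvd_mul (mul_dvd_mul (mul_dvd_mul (mul_dvd_mul hP hf2) dvd_rfl) hfac) dvd_rfl

lemma keyD_even {k r : ℕ} (hk : 4 ≤ k) (hr : 4 ≤ r) :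
    Nat.factorial (3 * r - 4) * 2 ^ (3 * r - 4) *
      (facProd (2 * k - 4) * Nat.factorial (2 * k - 4) * 3 ^ 2 *
        Nat.factorial (6 * k - 1) * 2 ^ (4 * k + 3)) ∣
    facProd (2 * k + r - 6) * Nat.factorial (2 * k + r - 6) * 3 ^ 2 *
      Nat.factorial (3 * (2 * k + r) - 4) * 2 ^ (2 * (2 * k + r) - 1) := by
  have hfac : Nat.factorial (3 * r - 4) * Nat.factorial (6 * k - 1) ∣
      Nat.factorial (3 * (2 * k + r) - 4) :=
    (Nat.factorial_mul_factorial_dvd_factorial_add _ _).trans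
      (Nat.factorial_dvd_factorial (by omega))
  have hP : (2:ℕ) ^ r * facProd (2 * k - 4) ∣ facProd (2 * k + r - 6) := by
    have h := facProd_tail (show 4 ≤ 2 * k - 4 by omega) (show 2 * k - 4 ≤ 2 * k + r - 6 by omega)
    rw [(by omega : 2 * k + r - 6 - (2 * k - 4) = r - 2)] at h
    exact (mul_dvd_mul (pow_dvd_pow 2 (by omega : r ≤ 3 * (r - 2))) dvd_rfl).trans h
  have hf2 : Nat.factorial (2 * k - 4) ∣ Nat.factorial (2 * k + r - 6) :=
    Nat.factorial_dvd_factorial (by omega)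
  have epow : (2:ℕ) ^ r * 2 ^ (2 * (2 * k + r) - 1) = 2 ^ (3 * r - 4) * 2 ^ (4 * k + 3) := by
    rw [← pow_add, ← pow_add]; congr 1; omega
  have e : Nat.factorial (3 * r - 4) * 2 ^ (3 * r - 4) *
      (facProd (2 * k - 4) * Nat.factorial (2 * k - 4) * 3 ^ 2 *
        Nat.factorial (6 * k - 1) * 2 ^ (4 * k + 3))
      = (2 ^ r * facProd (2 * k - 4)) * Nat.factorial (2 * k - 4) * 3 ^ 2 *
        (Nat.factorial (3 * r - 4) * Nat.factorial (6 * k - 1)) *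
        2 ^ (2 * (2 * k + r) - 1) := by
    rw [show (2:ℕ) ^ r * facProd (2 * k - 4) * Nat.factorial (2 * k - 4) * 3 ^ 2 *
        (Nat.factorial (3 * r - 4) * Nat.factorial (6 * k - 1)) * 2 ^ (2 * (2 * k + r) - 1)
        = facProd (2 * k - 4) * Nat.factorial (2 * k - 4) * 3 ^ 2 *
          (Nat.factorial (3 * r - 4) * Nat.factorial (6 * k - 1)) *
          (2 ^ r * 2 ^ (2 * (2 * k + r) - 1)) from by ring, epow]
    ring
  rw [e]
  exact mul_dvd_mul (mul_dvd_mul (mul_dvd_mul (mul_dvd_mul hP hf2) dvd_rfl) hfac) dvd_rfl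

/-- For every `k ≥ 2`, `24·D(k)` divides `d(2k+2)`; and for all `k ≥ 2`, `r ≥ 3`,
`(3r-4)!·2^{3r-4}·D(k)` divides `d(2k+r)`. -/
theorem D_dvd_d_general :
    (∀ k : ℕ, 2 ≤ k → 24 * D k ∣ d (2 * k + 2)) ∧
    (∀ k r : ℕ, 2 ≤ k → 3 ≤ r →
      Nat.factorial (3 * r - 4) * 2 ^ (3 * r - 4) * D k ∣ d (2 * k + r)) := by
  have fac3 : ∀ m : ℕ, Nat.factorial (m + 3) = (m + 3) * (m + 2) * (m + 1) * Nat.factorial m := by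
    intro m
    rw [show m + 3 = (m + 2) + 1 from rfl, Nat.factorial_succ,
      show m + 2 = (m + 1) + 1 from rfl, Nat.factorial_succ, Nat.factorial_succ]
    ring
  constructor
  · intro k hk
    rcases le_or_gt k 3 with h3 | h4
    · interval_cases k
      · decide
      · decide
    · have hk4 : 4 ≤ k := h4
      rw [D, if_neg (by omega), d, if_neg (by omega),
        if_neg (by rw [Nat.odd_iff]; omega)]
      have hd : (24:ℕ) ∣ (6 * k + 2) * (6 * k + 1) * (6 * k) := by
        obtain ⟨t, rfl | rfl⟩ := Nat.even_or_odd' k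
        · exact ⟨(6 * t + 1) * (12 * t + 1) * t, by ring⟩
        · exact ⟨(2 * t + 1) * (12 * t + 7) * (3 * t + 2), by ring⟩
      obtain ⟨c, hc⟩ := hd
      have h24 : Nat.factorial (3 * (2 * k + 2) - 4)
          = 24 * c * Nat.factorial (6 * k - 1) := by
        rw [(by omega : 3 * (2 * k + 2) - 4 = (6 * k - 1) + 3), fac3,
          (by omega : 6 * k - 1 + 3 = 6 * k + 2), (by omega : 6 * k - 1 + 2 = 6 * k + 1),
          (by omega : 6 * k - 1 + 1 = 6 * k), hc]
      rw [(by omega : 2 * k + 2 - 6 = 2 * k - 4), (by omega : 2 * (2 * k + 2) - 1 = 4 * k + 3),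
        h24]
      exact ⟨c * (Nat.factorial (2 * k + 2 - 5)) * 0 + c, by ring⟩
  · intro k r hk hr
    rcases le_or_gt k 3 with h3 | h4
    · -- k = 2 or k = 3
      interval_cases k
      · -- k = 2
        rcases le_or_gt r 4 with hr4 | hr5
        · interval_cases r
          · decide
          · decide
        · rw [D, if_pos (by norm_num), d, if_neg (by omega)]
          rcases Nat.even_or_odd r with he | ho
          · rw [if_neg (by rw [Nat.odd_iff] at *; rw [Nat.even_iff] at he; omega)]
            exact key_even (a := 3 * r - 4) (b := 6 * 2 - 1) (n := 2 * 2 + r)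
              (by omega) (by rw [Nat.even_iff] at he; omega)
          · rw [if_pos (by rw [Nat.odd_iff] at *; omega)]
            exact key_odd (a := 3 * r - 4) (b := 6 * 2 - 1) (n := 2 * 2 + r)
              (by omega) (by omega)
      · -- k = 3
        rw [D, if_pos (by norm_num), d, if_neg (by omega)]
        rcases Nat.even_or_odd r with he | ho
        · rw [if_neg (by rw [Nat.odd_iff]; rw [Nat.even_iff] at he; omega)]
          exact key_even (a := 3 * r - 4) (b := 6 * 3 - 1) (n := 2 * 3 + r)
            (by omega) (by rw [Nat.even_iff] at he; omega)
        · rw [if_pos (by rw [Nat.odd_iff] at *; omega)]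
          exact key_odd (a := 3 * r - 4) (b := 6 * 3 - 1) (n := 2 * 3 + r)
            (by omega) (by omega)
    · -- k ≥ 4
      rw [D, if_neg (by omega), d, if_neg (by omega)]
      rcases Nat.even_or_odd r with he | ho
      · rw [if_neg (by rw [Nat.odd_iff]; rw [Nat.even_iff] at he; omega)]
        exact keyD_even (by omega) (by rw [Nat.even_iff] at he; omega)
      · rw [if_pos (by rw [Nat.odd_iff] at *; omega)]
        exact keyD_odd (by omega) hr
end
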